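/- arXiv:0911.0786 — 4 statements merged into one kernel-verified Lean document; each statement's English description precedes it below -/
import Mathlib

section
/- There exists a constant k₀ > 0 (depending only on the constant c in hypothesis (w)) such that for every a, b ∈ ℝ with a < b and every u ∈ W^{2,2}(a,b), one has k₀ ∫_a^b (u')² dx ≤ (b−a)^{−2} ∫_a^b W(u) dx + (b−a)² ∫_a^b (u'')² dx. -/
/-!
Let `M = max |u'|` and `I = ∫ |u''|`, so that `u'` oscillates by at most `I` and, by
Cauchy–Schwarz, `I² ≤ (b - a) ∫ u''²`. If `M ≤ 2 I`, then `∫ u'² ≤ (b - a) M²` is controlled by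
`(b - a)² ∫ u''²`. Otherwise `|u'| ≥ M / 2` everywhere, so `u'` has constant sign and `u` is
monotone with slope at least `M / 2`. With `h = (b - a) / 3`, the values `u t`, `u (t + h)`,
`u (t + 2 h)` are `M h / 2` apart, so one of them stays `M h / 4` away from both wells `±1`, where
`W ≥ c (|s| - 1)²`. Integrating over `t ∈ [a, a + h]` gives `∫ W(u) ≳ c M² (b - a)³`, which
dominates `c (b - a)² ∫ u'²`.
-/

open MeasureTheory intervalIntegral Set

/-- `u ∈ W^{2,2}(a,b)` with first derivative `u'` and second derivative `u''`:
`u` is continuously differentiable on `[a,b]`, `u'` is absolutely continuous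
(with a.e. derivative `u''`), and `u'' ∈ L²(a,b)`. -/
def W22On (u u' u'' : ℝ → ℝ) (a b : ℝ) : Prop :=
  (∀ x ∈ Set.Icc a b, HasDerivWithinAt u (u' x) (Set.Icc a b) x) ∧
  ContinuousOn u' (Set.Icc a b) ∧
  MeasureTheory.IntegrableOn u'' (Set.Icc a b) ∧
  MeasureTheory.IntegrableOn (fun x => (u'' x) ^ 2) (Set.Icc a b) ∧
  (∀ x ∈ Set.Icc a b, u' x = u' a + ∫ t in a..x, u'' t)

theorem sq_integral_abs_le_mul_integral_sq {f : ℝ → ℝ} {a b : ℝ} (hab : a ≤ b)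
    (hf : IntervalIntegrable f volume a b)
    (hf2 : IntervalIntegrable (fun x => f x ^ 2) volume a b) :
    (∫ x in a..b, |f x|) ^ 2 ≤ (b - a) * ∫ x in a..b, f x ^ 2 := by
  rcases hab.eq_or_lt with rfl | hlt
  · simp
  set I := ∫ x in a..b, |f x|
  set S := ∫ x in a..b, f x ^ 2
  have hexpand : ∫ x in a..b, ((b - a) * |f x| - I) ^ 2 = (b - a) * ((b - a) * S - I ^ 2) := by
    have hpt : (fun x => ((b - a) * |f x| - I) ^ 2)
        = fun x => (b - a) ^ 2 * f x ^ 2 - 2 * (b - a) * I * |f x| + I ^ 2 := by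
      ext x; rw [← sq_abs (f x)]; ring
    rw [hpt, integral_add ((hf2.const_mul _).sub (hf.abs.const_mul _)) intervalIntegrable_const,
      integral_sub (hf2.const_mul _) (hf.abs.const_mul _), intervalIntegral.integral_const_mul,
      intervalIntegral.integral_const_mul, intervalIntegral.integral_const, smul_eq_mul]
    ring
  have hnonneg : 0 ≤ ∫ x in a..b, ((b - a) * |f x| - I) ^ 2 :=
    integral_nonneg hab fun _ _ => sq_nonneg _
  rw [hexpand] at hnonneg
  nlinarith [(mul_nonneg_iff_of_pos_left (sub_pos.2 hlt)).1 hnonneg]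

theorem abs_sub_le_integral_abs_of_eq_add_integral {g g' : ℝ → ℝ} {a b : ℝ}
    (hg' : IntervalIntegrable g' volume a b)
    (hg : ∀ x ∈ Icc a b, g x = g a + ∫ t in a..x, g' t) :
    ∀ x ∈ Icc a b, ∀ y ∈ Icc a b, |g x - g y| ≤ ∫ t in a..b, |g' t| := by
  have hint : ∀ x ∈ Icc a b, IntervalIntegrable g' volume a x := fun x hx =>
    hg'.mono_set (uIcc_subset_uIcc_left (Icc_subset_uIcc hx))
  suffices h : ∀ x ∈ Icc a b, ∀ y ∈ Icc a b, x ≤ y → |g y - g x| ≤ ∫ t in a..b, |g' t| by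
    intro x hx y hy
    rcases le_total x y with hxy | hyx
    · rw [abs_sub_comm]; exact h x hx y hy hxy
    · exact h y hy x hx hyx
  intro x hx y hy hxy
  have hdiff : g y - g x = ∫ t in x..y, g' t := by
    rw [hg x hx, hg y hy, add_sub_add_left_eq_sub,
      integral_interval_sub_left (hint y hy) (hint x hx)]
  calc |g y - g x| ≤ ∫ t in x..y, |g' t| := hdiff ▸ abs_integral_le_integral_abs hxy
    _ ≤ ∫ t in a..b, |g' t| := integral_mono_interval hx.1 hxy hy.2
        (Filter.Eventually.of_forall fun _ => abs_nonneg _) hg'.abs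

theorem IsPreconnected.le_or_le_neg_of_le_abs {s : Set ℝ} {g : ℝ → ℝ} {m : ℝ}
    (hs : IsPreconnected s) (hg : ContinuousOn g s) (hm : 0 < m) (h : ∀ x ∈ s, m ≤ |g x|) :
    (∀ x ∈ s, m ≤ g x) ∨ (∀ x ∈ s, g x ≤ -m) := by
  by_contra! ⟨⟨x, hx, hgx⟩, ⟨y, hy, hgy⟩⟩
  have hx' : g x ≤ -m := by cases abs_cases (g x) <;> linarith [h x hx]
  have hy' : m ≤ g y := by cases abs_cases (g y) <;> linarith [h y hy]
  obtain ⟨z, hz, hgz⟩ := hs.intermediate_value hx hy hg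
    (show (0 : ℝ) ∈ Icc (g x) (g y) from ⟨by linarith, by linarith⟩)
  have := h z hz
  rw [hgz, abs_zero] at this
  linarith

theorem mul_sub_le_sub_of_hasDerivWithinAt_Icc {v v' : ℝ → ℝ} {a b m : ℝ}
    (hv : ∀ x ∈ Icc a b, HasDerivWithinAt v (v' x) (Icc a b) x)
    (hm : ∀ x ∈ Icc a b, m ≤ v' x) :
    ∀ x ∈ Icc a b, ∀ y ∈ Icc a b, x ≤ y → m * (y - x) ≤ v y - v x := by
  have hderiv : ∀ x ∈ interior (Icc a b), HasDerivAt v (v' x) x := fun x hx =>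
    (hv x (interior_subset hx)).hasDerivAt (mem_interior_iff_mem_nhds.1 hx)
  exact (convex_Icc a b).mul_sub_le_image_sub_of_le_deriv
    (fun x hx => (hv x hx).continuousWithinAt)
    (fun x hx => (hderiv x hx).differentiableAt.differentiableWithinAt)
    (fun x hx => (hderiv x hx).deriv ▸ hm x (interior_subset hx))

/-- Two of the three values would otherwise be `r`-close to the same well `±1`, while they are
`2 r` apart. -/
theorem sq_le_sum_sq_abs_sub_one {p q s r : ℝ} (hr : 0 ≤ r) (hpq : p + 2 * r ≤ q)
    (hqs : q + 2 * r ≤ s) : r ^ 2 ≤ (|p| - 1) ^ 2 + (|q| - 1) ^ 2 + (|s| - 1) ^ 2 := by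
  by_contra! h
  have near : ∀ x, (|x| - 1) ^ 2 < r ^ 2 → 1 - r < |x| ∧ |x| < 1 + r := fun x hx => by
    have := abs_lt.1 (abs_lt_of_sq_lt_sq hx hr)
    constructor <;> linarith
  obtain ⟨hp1, hp2⟩ := near p (by nlinarith [sq_nonneg (|q| - 1), sq_nonneg (|s| - 1)])
  obtain ⟨hq1, hq2⟩ := near q (by nlinarith [sq_nonneg (|p| - 1), sq_nonneg (|s| - 1)])
  obtain ⟨hs1, hs2⟩ := near s (by nlinarith [sq_nonneg (|p| - 1), sq_nonneg (|q| - 1)])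
  rcases abs_cases p with ⟨hp, _⟩ | ⟨hp, _⟩ <;> rcases abs_cases q with ⟨hq, _⟩ | ⟨hq, _⟩ <;>
    rcases abs_cases s with ⟨hs, _⟩ | ⟨hs, _⟩ <;> linarith

theorem integral_eq_integral_sum_shifts {f : ℝ → ℝ} {a h : ℝ} {n : ℕ}
    (hf : ∀ k < n, IntervalIntegrable f volume (a + k * h) (a + (k + 1 : ℕ) * h)) :
    ∫ x in a..a + n * h, f x = ∫ t in a..a + h, ∑ k ∈ Finset.range n, f (t + k * h) := by
  have hshift : ∀ k : ℕ,
      ∫ t in a..a + h, f (t + k * h) = ∫ x in a + k * h..a + (k + 1 : ℕ) * h, f x := fun k => by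
    rw [integral_comp_add_right]; push_cast; ring_nf
  rw [intervalIntegral.integral_finsetSum fun k hk => ?_]
  · simp_rw [hshift]
    simpa using (sum_integral_adjacent_intervals (a := fun k : ℕ => a + k * h) hf).symm
  · have := (hf k (Finset.mem_range.1 hk)).comp_add_right (k * h)
    push_cast at this
    convert this using 1 <;> ring

theorem sq_mul_cube_div_le_integral_sq_abs_sub_one_of_mul_sub_le_sub {v : ℝ → ℝ} {a b m : ℝ}
    (hab : a ≤ b) (hm : 0 ≤ m) (hv : ContinuousOn v (Icc a b))
    (hgrowth : ∀ x ∈ Icc a b, ∀ y ∈ Icc a b, x ≤ y → m * (y - x) ≤ v y - v x) :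
    m ^ 2 * (b - a) ^ 3 / 108 ≤ ∫ x in a..b, (|v x| - 1) ^ 2 := by
  set h := (b - a) / 3
  have hh : 0 ≤ h := by positivity
  have hb3 : b = a + 3 * h := by simp only [h]; ring
  have hb : b = a + (3 : ℕ) * h := by exact_mod_cast hb3
  have hmem : ∀ t ∈ Icc a (a + h), ∀ k : ℕ, k ≤ 2 → t + k * h ∈ Icc a b := by
    intro t ht k hk
    have : (k : ℝ) ≤ 2 := by exact_mod_cast hk
    constructor <;> nlinarith [ht.1, ht.2]
  have hg : ContinuousOn (fun x => (|v x| - 1) ^ 2) (Icc a b) :=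
    ((continuous_abs.comp_continuousOn hv).sub continuousOn_const).pow 2
  have hpieces : ∀ k : ℕ, k < 3 → IntervalIntegrable (fun x => (|v x| - 1) ^ 2) volume
      (a + k * h) (a + (k + 1 : ℕ) * h) := by
    intro k hk
    have : (k : ℝ) + 1 ≤ 3 := by exact_mod_cast hk
    refine (hg.mono ?_).intervalIntegrable
    have hk0 : (0 : ℝ) ≤ k := k.cast_nonneg
    rw [uIcc_of_le (by push_cast; nlinarith)]
    exact Icc_subset_Icc (by nlinarith) (by push_cast; nlinarith)
  have hpoint : ∀ t ∈ Icc a (a + h),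
      (m * h / 2) ^ 2 ≤ ∑ k ∈ Finset.range 3, (|v (t + k * h)| - 1) ^ 2 := by
    intro t ht
    have h0 := hmem t ht 0 (by norm_num)
    have h1 := hmem t ht 1 (by norm_num)
    have h2 := hmem t ht 2 (by norm_num)
    simp only [Nat.cast_zero, Nat.cast_one, Nat.cast_ofNat, zero_mul, add_zero, one_mul] at h0 h1 h2
    simp only [Finset.sum_range_succ, Finset.sum_range_zero, Nat.cast_zero, Nat.cast_one,
      Nat.cast_ofNat, zero_mul, add_zero, one_mul, zero_add]
    refine sq_le_sum_sq_abs_sub_one (div_nonneg (mul_nonneg hm hh) zero_le_two) ?_ ?_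
    · nlinarith [hgrowth _ h0 _ h1 (by linarith)]
    · nlinarith [hgrowth _ h1 _ h2 (by linarith)]
  calc m ^ 2 * (b - a) ^ 3 / 108 = ∫ _ in a..a + h, (m * h / 2) ^ 2 := by
        rw [intervalIntegral.integral_const, smul_eq_mul]; ring
    _ ≤ ∫ t in a..a + h, ∑ k ∈ Finset.range 3, (|v (t + k * h)| - 1) ^ 2 := by
      refine integral_mono_on (by linarith) intervalIntegrable_const ?_ hpoint
      refine ContinuousOn.intervalIntegrable_of_Icc (by linarith) (continuousOn_finsetSum _ ?_)
      intro k hk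
      exact hg.comp (continuousOn_id.add continuousOn_const)
        fun t ht => hmem t ht k (by have := Finset.mem_range.1 hk; omega)
    _ = ∫ x in a..b, (|v x| - 1) ^ 2 := by
        conv_rhs => rw [hb]
        exact (integral_eq_integral_sum_shifts hpieces).symm

theorem sq_mul_cube_div_le_integral_sq_abs_sub_one_of_le_abs_deriv {u u' : ℝ → ℝ} {a b m : ℝ}
    (hab : a ≤ b) (hm : 0 < m) (hu : ∀ x ∈ Icc a b, HasDerivWithinAt u (u' x) (Icc a b) x)
    (hu' : ContinuousOn u' (Icc a b)) (hlow : ∀ x ∈ Icc a b, m ≤ |u' x|) :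
    m ^ 2 * (b - a) ^ 3 / 108 ≤ ∫ x in a..b, (|u x| - 1) ^ 2 := by
  have huc : ContinuousOn u (Icc a b) := fun x hx => (hu x hx).continuousWithinAt
  rcases isPreconnected_Icc.le_or_le_neg_of_le_abs hu' hm hlow with hpos | hneg
  · exact sq_mul_cube_div_le_integral_sq_abs_sub_one_of_mul_sub_le_sub hab hm.le huc
      (mul_sub_le_sub_of_hasDerivWithinAt_Icc hu hpos)
  · simpa using sq_mul_cube_div_le_integral_sq_abs_sub_one_of_mul_sub_le_sub (v := -u) hab hm.le
      huc.neg (mul_sub_le_sub_of_hasDerivWithinAt_Icc (fun x hx => (hu x hx).neg)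
        fun x hx => le_neg_of_le_neg (hneg x hx))

theorem integral_sq_le_mul_sq_of_abs_le {f : ℝ → ℝ} {a b M : ℝ} (hab : a ≤ b)
    (hf : IntervalIntegrable (fun x => f x ^ 2) volume a b) (hM : ∀ x ∈ Icc a b, |f x| ≤ M) :
    ∫ x in a..b, f x ^ 2 ≤ (b - a) * M ^ 2 := by
  calc ∫ x in a..b, f x ^ 2 ≤ ∫ _ in a..b, M ^ 2 :=
        integral_mono_on hab hf intervalIntegrable_const fun x hx =>
          sq_abs (f x) ▸ pow_le_pow_left₀ (abs_nonneg _) (hM x hx) 2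
    _ = (b - a) * M ^ 2 := by rw [intervalIntegral.integral_const, smul_eq_mul]

theorem integral_sq_le_of_le_two_mul_integral_abs {f g : ℝ → ℝ} {a b M : ℝ} (hab : a ≤ b)
    (hf : IntervalIntegrable (fun x => f x ^ 2) volume a b) (hM : ∀ x ∈ Icc a b, |f x| ≤ M)
    (hg : IntervalIntegrable g volume a b) (hg2 : IntervalIntegrable (fun x => g x ^ 2) volume a b)
    (hMg : M ≤ 2 * ∫ x in a..b, |g x|) :
    ∫ x in a..b, f x ^ 2 ≤ 4 * (b - a) ^ 2 * ∫ x in a..b, g x ^ 2 := by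
  have hM0 : 0 ≤ M := (abs_nonneg _).trans (hM a (left_mem_Icc.2 hab))
  have hMsq : M ^ 2 ≤ 4 * (∫ x in a..b, |g x|) ^ 2 := by nlinarith
  have hCS := sq_integral_abs_le_mul_integral_sq hab hg hg2
  calc ∫ x in a..b, f x ^ 2 ≤ (b - a) * M ^ 2 := integral_sq_le_mul_sq_of_abs_le hab hf hM
    _ ≤ (b - a) * (4 * ((b - a) * ∫ x in a..b, g x ^ 2)) :=
        mul_le_mul_of_nonneg_left (by linarith) (sub_nonneg.2 hab)
    _ = 4 * (b - a) ^ 2 * ∫ x in a..b, g x ^ 2 := by ring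

theorem mul_sq_abs_sub_one_le {W : ℝ → ℝ} {c : ℝ}
    (hWp : ∀ s, 0 ≤ s → c * (s - 1) ^ 2 ≤ W s) (hWm : ∀ s, s ≤ 0 → c * (s + 1) ^ 2 ≤ W s)
    (s : ℝ) : c * (|s| - 1) ^ 2 ≤ W s := by
  rcases le_total 0 s with hs | hs
  · rw [abs_of_nonneg hs]
    exact hWp s hs
  · rw [abs_of_nonpos hs, ← neg_add', neg_sq]
    exact hWm s hs

theorem mul_sq_mul_integral_sq_le_integral_of_le_abs_deriv {W u u' : ℝ → ℝ} {a b c M : ℝ}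
    (hab : a ≤ b) (hc : 0 ≤ c) (hW : Continuous W) (hWp : ∀ s, 0 ≤ s → c * (s - 1) ^ 2 ≤ W s)
    (hWm : ∀ s, s ≤ 0 → c * (s + 1) ^ 2 ≤ W s)
    (hu : ∀ x ∈ Icc a b, HasDerivWithinAt u (u' x) (Icc a b) x) (hu' : ContinuousOn u' (Icc a b))
    (hM0 : 0 < M) (hM : ∀ x ∈ Icc a b, |u' x| ≤ M) (hlow : ∀ x ∈ Icc a b, M / 2 ≤ |u' x|) :
    c * (b - a) ^ 2 * ∫ x in a..b, u' x ^ 2 ≤ 432 * ∫ x in a..b, W (u x) := by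
  have huc : ContinuousOn u (Icc a b) := fun x hx => (hu x hx).continuousWithinAt
  have hA := integral_sq_le_mul_sq_of_abs_le hab ((hu'.pow 2).intervalIntegrable_of_Icc hab) hM
  have hD := sq_mul_cube_div_le_integral_sq_abs_sub_one_of_le_abs_deriv hab (half_pos hM0) hu hu'
    hlow
  have hW_int : c * ∫ x in a..b, (|u x| - 1) ^ 2 ≤ ∫ x in a..b, W (u x) := by
    rw [← intervalIntegral.integral_const_mul]
    exact integral_mono_on hab
      ((((continuous_abs.comp_continuousOn huc).sub continuousOn_const).pow 2).const_smul c
        |>.intervalIntegrable_of_Icc hab)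
      ((hW.comp_continuousOn huc).intervalIntegrable_of_Icc hab)
      fun x _ => mul_sq_abs_sub_one_le hWp hWm (u x)
  calc c * (b - a) ^ 2 * ∫ x in a..b, u' x ^ 2 ≤ c * (b - a) ^ 2 * ((b - a) * M ^ 2) := by
        gcongr
    _ = 432 * (c * ((M / 2) ^ 2 * (b - a) ^ 3 / 108)) := by ring
    _ ≤ 432 * ∫ x in a..b, W (u x) := by
        gcongr
        exact (mul_le_mul_of_nonneg_left hD hc).trans hW_int

theorem interpolation_inequality {W u u' u'' : ℝ → ℝ} {a b c : ℝ} (hc : 0 ≤ c)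
    (hW : Continuous W) (hWp : ∀ s, 0 ≤ s → c * (s - 1) ^ 2 ≤ W s)
    (hWm : ∀ s, s ≤ 0 → c * (s + 1) ^ 2 ≤ W s) (hab : a < b) (hu : W22On u u' u'' a b) :
    min (1 / 4) (c / 432) * ∫ x in a..b, u' x ^ 2 ≤
      ((b - a) ^ 2)⁻¹ * (∫ x in a..b, W (u x)) + (b - a) ^ 2 * ∫ x in a..b, u'' x ^ 2 := by
  obtain ⟨hu, hu', hu''1, hu''2, hu'eq⟩ := hu
  rw [← intervalIntegrable_iff_integrableOn_Icc_of_le hab.le] at hu''1 hu''2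
  have hL : 0 < (b - a) ^ 2 := by nlinarith
  have hA : 0 ≤ ∫ x in a..b, u' x ^ 2 := integral_nonneg hab.le fun _ _ => sq_nonneg _
  have hB : 0 ≤ ∫ x in a..b, W (u x) := integral_nonneg hab.le fun x _ =>
    (mul_nonneg hc (sq_nonneg _)).trans (mul_sq_abs_sub_one_le hWp hWm (u x))
  have hC : 0 ≤ ∫ x in a..b, u'' x ^ 2 := integral_nonneg hab.le fun _ _ => sq_nonneg _
  have hI : 0 ≤ ∫ x in a..b, |u'' x| := integral_nonneg hab.le fun _ _ => abs_nonneg _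
  obtain ⟨xm, hxm, hmax⟩ := isCompact_Icc.exists_isMaxOn (nonempty_Icc.2 hab.le)
    (continuous_abs.comp_continuousOn hu')
  have hM : ∀ x ∈ Icc a b, |u' x| ≤ |u' xm| := hmax
  have hosc : ∀ x ∈ Icc a b, |u' xm| - ∫ t in a..b, |u'' t| ≤ |u' x| := fun x hx => by
    linarith [abs_sub_abs_le_abs_sub (u' xm) (u' x),
      abs_sub_le_integral_abs_of_eq_add_integral hu''1 hu'eq xm hxm x hx]
  rcases le_or_gt (|u' xm|) (2 * ∫ t in a..b, |u'' t|) with hsmall | hlarge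
  · have hA_le := integral_sq_le_of_le_two_mul_integral_abs hab.le
      ((hu'.pow 2).intervalIntegrable_of_Icc hab.le) hM hu''1 hu''2 hsmall
    calc min (1 / 4) (c / 432) * ∫ x in a..b, u' x ^ 2 ≤ 1 / 4 * ∫ x in a..b, u' x ^ 2 :=
          mul_le_mul_of_nonneg_right (min_le_left _ _) hA
      _ ≤ (b - a) ^ 2 * ∫ x in a..b, u'' x ^ 2 := by linarith
      _ ≤ _ := le_add_of_nonneg_left (by positivity)
  · have hA_le := mul_sq_mul_integral_sq_le_integral_of_le_abs_deriv hab.le hc hW hWp hWm hu hu'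
      (by linarith) hM fun x hx => by linarith [hosc x hx]
    calc min (1 / 4) (c / 432) * ∫ x in a..b, u' x ^ 2 ≤ c / 432 * ∫ x in a..b, u' x ^ 2 :=
          mul_le_mul_of_nonneg_right (min_le_right _ _) hA
      _ ≤ ((b - a) ^ 2)⁻¹ * ∫ x in a..b, W (u x) := by rw [le_inv_mul_iff₀ hL]; linarith
      _ ≤ _ := le_add_of_nonneg_right (by positivity)

/-- Nonlinear interpolation: there is a constant `k₀ > 0`, depending only on the
constant `c` in hypothesis (w), such that for every double-well potential `W`
satisfying the structural assumptions with this `c`, every `a < b` and every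
`u ∈ W^{2,2}(a,b)`,
`k₀ ∫_a^b (u')² ≤ (b−a)⁻² ∫_a^b W(u) + (b−a)² ∫_a^b (u'')²`. -/
theorem nonlinear_interpolation (c : ℝ) (hc : 0 < c) :
    ∃ k₀ : ℝ, 0 < k₀ ∧
      ∀ W : ℝ → ℝ, Continuous W → (∀ s, 0 ≤ W s) →
        (∀ s, W s = 0 ↔ s = 1 ∨ s = -1) →
        (∀ s, 0 ≤ s → c * (s - 1) ^ 2 ≤ W s) →
        (∀ s, s ≤ 0 → c * (s + 1) ^ 2 ≤ W s) →
        ∀ a b : ℝ, a < b → ∀ u u' u'' : ℝ → ℝ, W22On u u' u'' a b →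
          k₀ * ∫ x in a..b, (u' x) ^ 2 ≤
            ((b - a) ^ 2)⁻¹ * (∫ x in a..b, W (u x)) +
              (b - a) ^ 2 * ∫ x in a..b, (u'' x) ^ 2 :=
  ⟨min (1 / 4) (c / 432), by positivity, fun _ hW _ _ hWp hWm _ _ hab _ _ _ hu =>
    interpolation_inequality hc.le hW hWp hWm hab hu⟩
end

section
/- For every a, b ∈ ℝ with a < b, every u ∈ W^{2,2}(a,b), every c > 0, and either choice of sign ±, one has c ∫_a^b (u')² dx ≤ c³ ∫_a^b (u'')² dx + ∫_a^b (u ± 1)²/c dx + (c u'(b) + u(b) ± 1)² − (c u'(a) + u(a) ± 1)². -/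
/-!
With `g = c u' + u + σ` one has `g' = c u'' + u'` almost everywhere, and pointwise
`c³ u''² + (u + σ)²/c + 2 g g' - c u'² = (c² u'' + c u' + u + σ)² / c ≥ 0`.
Integrating over `[a, b]` gives the claim, because `g` is absolutely continuous, so that
`∫ 2 g g' = g(b)² - g(a)²`.
-/

open MeasureTheory intervalIntegral

open Set

theorem integral_two_mul_primitive_mul {h : ℝ → ℝ} {a b : ℝ}
    (hh : IntervalIntegrable h volume a b) (C : ℝ) :
    ∫ x in a..b, 2 * (C + ∫ t in a..x, h t) * h x = (C + ∫ t in a..b, h t) ^ 2 - C ^ 2 := by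
  set G : ℝ → ℝ := fun x => C + ∫ t in a..x, h t
  have hG : AbsolutelyContinuousOnInterval G a b :=
    (LipschitzWith.const C).lipschitzOnWith.absolutelyContinuousOnInterval.add
      (hh.absolutelyContinuousOnInterval_intervalIntegral left_mem_uIcc)
  have hderiv : ∀ᵐ x, x ∈ uIoc a b → deriv G x * G x + G x * deriv G x = 2 * G x * h x := by
    filter_upwards [hh.ae_hasDerivAt_integral] with x hx hxab
    rw [((hx (uIoc_subset_uIcc hxab) a left_mem_uIcc).const_add C).deriv]
    ring
  have hGa : G a = C := by simp [G]
  rw [← integral_congr_ae hderiv, hG.integral_deriv_mul_eq_sub hG, hGa]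
  ring

theorem eq_add_integral_of_hasDerivWithinAt {f f' : ℝ → ℝ} {a b : ℝ}
    (hderiv : ∀ x ∈ Icc a b, HasDerivWithinAt f (f' x) (Icc a b) x)
    (hf' : ContinuousOn f' (Icc a b)) {x : ℝ} (hx : x ∈ Icc a b) :
    f x = f a + ∫ t in a..x, f' t := by
  have hsub : Icc a x ⊆ Icc a b := Icc_subset_Icc_right hx.2
  rw [integral_eq_sub_of_hasDerivAt_of_le hx.1
    (fun y hy => (hderiv y (hsub hy)).continuousWithinAt.mono hsub)
    (fun y hy => (hderiv y (hsub (Ioo_subset_Icc_self hy))).hasDerivAt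
      (Icc_mem_nhds hy.1 (hy.2.trans_le hx.2)))
    ((hf'.mono hsub).intervalIntegrable_of_Icc hx.1)]
  ring

theorem mul_sq_le_of_pos {c : ℝ} (hc : 0 < c) (p q r : ℝ) :
    c * p ^ 2 ≤ c ^ 3 * q ^ 2 + r ^ 2 / c + 2 * (c * p + r) * (c * q + p) := by
  have key : c ^ 3 * q ^ 2 + r ^ 2 / c + 2 * (c * p + r) * (c * q + p) - c * p ^ 2
      = (c ^ 2 * q + c * p + r) ^ 2 / c := by
    field_simp
    ring
  have := div_nonneg (sq_nonneg (c ^ 2 * q + c * p + r)) hc.le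
  linarith

namespace W22On

variable {u u' u'' : ℝ → ℝ} {a b : ℝ}

theorem continuousOn (hu : W22On u u' u'' a b) : ContinuousOn u (Icc a b) :=
  fun x hx => (hu.1 x hx).continuousWithinAt

theorem continuousOn_deriv (hu : W22On u u' u'' a b) : ContinuousOn u' (Icc a b) :=
  hu.2.1

theorem intervalIntegrable_deriv (hu : W22On u u' u'' a b) (hab : a ≤ b) :
    IntervalIntegrable u' volume a b :=
  hu.continuousOn_deriv.intervalIntegrable_of_Icc hab

theorem intervalIntegrable_secondDeriv (hu : W22On u u' u'' a b) (hab : a ≤ b) :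
    IntervalIntegrable u'' volume a b :=
  (intervalIntegrable_iff_integrableOn_Icc_of_le hab).2 hu.2.2.1

theorem intervalIntegrable_secondDeriv_sq (hu : W22On u u' u'' a b) (hab : a ≤ b) :
    IntervalIntegrable (fun x => u'' x ^ 2) volume a b :=
  (intervalIntegrable_iff_integrableOn_Icc_of_le hab).2 hu.2.2.2.1

theorem eqOn_add_integral (hu : W22On u u' u'' a b) (hab : a ≤ b) (c σ : ℝ) :
    EqOn (fun x => c * u' x + (u x + σ))
      (fun x => (c * u' a + (u a + σ)) + ∫ t in a..x, c * u'' t + u' t) (uIcc a b) := by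
  intro x hx
  beta_reduce
  have hsub : uIcc a x ⊆ uIcc a b := uIcc_subset_uIcc_left hx
  rw [uIcc_of_le hab] at hx
  rw [integral_add (((hu.intervalIntegrable_secondDeriv hab).mono_set hsub).const_mul c)
      ((hu.intervalIntegrable_deriv hab).mono_set hsub),
    intervalIntegral.integral_const_mul, hu.2.2.2.2 x hx,
    eq_add_integral_of_hasDerivWithinAt hu.1 hu.continuousOn_deriv hx]
  ring

theorem integral_two_mul_mul_eq_sq_sub_sq (hu : W22On u u' u'' a b) (hab : a ≤ b) (c σ : ℝ) :
    ∫ x in a..b, 2 * (c * u' x + (u x + σ)) * (c * u'' x + u' x) =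
      (c * u' b + (u b + σ)) ^ 2 - (c * u' a + (u a + σ)) ^ 2 := by
  have hg : ∀ x ∈ uIcc a b, c * u' x + (u x + σ) =
      (c * u' a + (u a + σ)) + ∫ t in a..x, c * u'' t + u' t :=
    hu.eqOn_add_integral hab c σ
  rw [integral_congr fun x hx => by rw [hg x hx],
    integral_two_mul_primitive_mul
      (((hu.intervalIntegrable_secondDeriv hab).const_mul c).add (hu.intervalIntegrable_deriv hab)),
    hg b right_mem_uIcc]

end W22On

theorem interpolation_with_boundary_terms_general
    (a b : ℝ) (hab : a < b) (u u' u'' : ℝ → ℝ) (hu : W22On u u' u'' a b)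
    (c : ℝ) (hc : 0 < c) (σ : ℝ) :
    c * ∫ x in a..b, (u' x) ^ 2 ≤
      c ^ 3 * (∫ x in a..b, (u'' x) ^ 2) +
        (∫ x in a..b, (u x + σ) ^ 2 / c) +
        (c * u' b + u b + σ) ^ 2 - (c * u' a + u a + σ) ^ 2 := by
  have hv : ContinuousOn (fun x => u x + σ) (Icc a b) := hu.continuousOn.add continuousOn_const
  have hu'sq : IntervalIntegrable (fun x => c * u' x ^ 2) volume a b :=
    ((hu.continuousOn_deriv.pow 2).intervalIntegrable_of_Icc hab.le).const_mul c
  have hu''sq : IntervalIntegrable (fun x => c ^ 3 * u'' x ^ 2) volume a b :=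
    (hu.intervalIntegrable_secondDeriv_sq hab.le).const_mul _
  have hvsq : IntervalIntegrable (fun x => (u x + σ) ^ 2 / c) volume a b :=
    ((hv.pow 2).div_const c).intervalIntegrable_of_Icc hab.le
  have hgg' : IntervalIntegrable
      (fun x => 2 * (c * u' x + (u x + σ)) * (c * u'' x + u' x)) volume a b :=
    (((hu.intervalIntegrable_secondDeriv hab.le).const_mul c).add
      (hu.intervalIntegrable_deriv hab.le)).continuousOn_mul <| by
        rw [uIcc_of_le hab.le]
        exact continuousOn_const.mul ((continuousOn_const.mul hu.continuousOn_deriv).add hv)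
  calc c * ∫ x in a..b, u' x ^ 2 = ∫ x in a..b, c * u' x ^ 2 :=
        (intervalIntegral.integral_const_mul _ _).symm
    _ ≤ ∫ x in a..b, (c ^ 3 * u'' x ^ 2 + (u x + σ) ^ 2 / c +
          2 * (c * u' x + (u x + σ)) * (c * u'' x + u' x)) :=
        integral_mono_on hab.le hu'sq ((hu''sq.add hvsq).add hgg')
          fun x _ => mul_sq_le_of_pos hc _ _ _
    _ = _ := by
        rw [integral_add (hu''sq.add hvsq) hgg', integral_add hu''sq hvsq,
          intervalIntegral.integral_const_mul, hu.integral_two_mul_mul_eq_sq_sub_sq hab.le]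
        ring

/-- Interpolation with boundary terms: for every `a < b`, every `u ∈ W^{2,2}(a,b)`,
every `c > 0` and either choice of sign `σ = ±1`,
`c ∫_a^b (u')² ≤ c³ ∫_a^b (u'')² + ∫_a^b (u+σ)²/c + (c u'(b)+u(b)+σ)² − (c u'(a)+u(a)+σ)²`. -/
theorem interpolation_with_boundary_terms
    (a b : ℝ) (hab : a < b) (u u' u'' : ℝ → ℝ) (hu : W22On u u' u'' a b)
    (c : ℝ) (hc : 0 < c) (σ : ℝ) (hσ : σ = 1 ∨ σ = -1) :
    c * ∫ x in a..b, (u' x) ^ 2 ≤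
      c ^ 3 * (∫ x in a..b, (u'' x) ^ 2) +
        (∫ x in a..b, (u x + σ) ^ 2 / c) +
        (c * u' b + u b + σ) ^ 2 - (c * u' a + u a + σ) ^ 2 :=
  interpolation_with_boundary_terms_general a b hab u u' u'' hu c hc σ
end

section
/- Let k₀ > 0 be the constant from the nonlinear interpolation inequality for W and let 0 < k < k₀. Then the constant m_k := inf { ∫_ℝ (W(f) − k(f')² + (f'')²) dx : f ∈ 𝒜 } is strictly positive. -/
/-!
On every unit interval the interpolation inequality gives `k₀ ∫ f'² ≤ ∫ W(f) + ∫ f''²`, so the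
energy there is at least `(1 - k/k₀) (∫ W(f) + ∫ f''²) ≥ 0`. On the unit interval starting at a
zero of `f`, either `|f| ≤ 1/2` throughout and `∫ W(f) ≥ c/4`, or `|f|` exceeds `1/2` somewhere and
Cauchy–Schwarz gives `∫ f'² ≥ 1/4`, hence `∫ W(f) + ∫ f''² ≥ k₀/4`. The energy density vanishes
a.e. outside `[-T, T]`, so the total energy is a sum of nonnegative unit-interval energies, one of
which is at least `(1 - k/k₀) min (c/4) (k₀/4)`.
-/

open MeasureTheory intervalIntegral

/-- `u ∈ W^{2,2}_loc(ℝ)` with first derivative `u'` and second derivative `u''`. -/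
def W22loc (u u' u'' : ℝ → ℝ) : Prop :=
  (∀ x : ℝ, HasDerivAt u (u' x) x) ∧
  Continuous u' ∧
  (∀ a b : ℝ, MeasureTheory.IntegrableOn u'' (Set.Icc a b)) ∧
  (∀ a b : ℝ, MeasureTheory.IntegrableOn (fun x => (u'' x) ^ 2) (Set.Icc a b)) ∧
  (∀ x y : ℝ, u' y = u' x + ∫ t in x..y, u'' t)

/-- The optimal-profile energy
`m_k := inf { ∫_ℝ (W(f) − k (f')² + (f'')²) : f ∈ 𝒜 }`, where
`𝒜 = { f ∈ W^{2,2}_loc(ℝ) : ∃ T > 0, f ≡ 1 on (T,∞), f ≡ −1 on (−∞,−T) }`. -/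
noncomputable def mConst (W : ℝ → ℝ) (k : ℝ) : ℝ :=
  sInf {r : ℝ | ∃ f f' f'' : ℝ → ℝ, W22loc f f' f'' ∧
    (∃ T : ℝ, 0 < T ∧ (∀ x, T < x → f x = 1) ∧ (∀ x, x < -T → f x = -1)) ∧
    r = ∫ x : ℝ, (W (f x) - k * (f' x) ^ 2 + (f'' x) ^ 2)}

open Set Filter Topology

lemma sq_integral_le_mul_integral_sq {g : ℝ → ℝ} {a b : ℝ} (hab : a ≤ b)
    (hg : IntervalIntegrable g volume a b)
    (hg2 : IntervalIntegrable (fun x => g x ^ 2) volume a b) :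
    (∫ x in a..b, g x) ^ 2 ≤ (b - a) * ∫ x in a..b, g x ^ 2 := by
  set L := b - a
  set I := ∫ x in a..b, g x
  set J := ∫ x in a..b, g x ^ 2
  rcases hab.eq_or_lt with rfl | hlt
  · simp [I, L]
  have hL : 0 < L := sub_pos.2 hlt
  have hexp : ∫ x in a..b, (L * g x - I) ^ 2 = L * (L * J - I ^ 2) := by
    have e : (fun x => (L * g x - I) ^ 2) =
        fun x => L ^ 2 * g x ^ 2 - (2 * L * I) * g x + I ^ 2 := by
      ext x; ring
    rw [e, intervalIntegral.integral_add ((hg2.const_mul _).sub (hg.const_mul _))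
        intervalIntegrable_const, intervalIntegral.integral_sub (hg2.const_mul _) (hg.const_mul _),
      intervalIntegral.integral_const_mul, intervalIntegral.integral_const_mul,
      intervalIntegral.integral_const, smul_eq_mul]
    ring
  have h0 : 0 ≤ L * (L * J - I ^ 2) :=
    hexp ▸ intervalIntegral.integral_nonneg hab fun x _ => sq_nonneg _
  nlinarith [(mul_nonneg_iff_of_pos_left hL).1 h0]

lemma sq_sub_le_mul_integral_sq_deriv {u u' : ℝ → ℝ} {a b : ℝ} (hab : a ≤ b)
    (hu : ∀ x ∈ uIcc a b, HasDerivAt u (u' x) x) (hu' : IntervalIntegrable u' volume a b)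
    (hu'2 : IntervalIntegrable (fun x => u' x ^ 2) volume a b) :
    (u b - u a) ^ 2 ≤ (b - a) * ∫ x in a..b, u' x ^ 2 :=
  intervalIntegral.integral_eq_sub_of_hasDerivAt hu hu' ▸
    sq_integral_le_mul_integral_sq hab hu' hu'2

lemma intervalIntegral_add_nat_nonneg {g : ℝ → ℝ}
    (hg : ∀ a b, IntervalIntegrable g volume a b) (h : ∀ a, 0 ≤ ∫ x in a..a + 1, g x) (a : ℝ) :
    ∀ n : ℕ, 0 ≤ ∫ x in a..a + n, g x
  | 0 => by simp
  | n + 1 => by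
    rw [← intervalIntegral.integral_add_adjacent_intervals (hg a (a + n)) (hg _ _), Nat.cast_succ,
      ← add_assoc]
    exact add_nonneg (intervalIntegral_add_nat_nonneg hg h a n) (h _)

lemma intervalIntegral_le_intervalIntegral_sub_nat_add_nat {g : ℝ → ℝ}
    (hg : ∀ a b, IntervalIntegrable g volume a b) (h : ∀ a, 0 ≤ ∫ x in a..a + 1, g x)
    (a : ℝ) (n : ℕ) : ∫ x in a..a + 1, g x ≤ ∫ x in a - n..a + 1 + n, g x := by
  rw [← intervalIntegral.integral_add_adjacent_intervals (hg (a - n) a) (hg a (a + 1 + n)),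
    ← intervalIntegral.integral_add_adjacent_intervals (hg a (a + 1)) (hg (a + 1) (a + 1 + n))]
  have hleft := intervalIntegral_add_nat_nonneg hg h (a - n) n
  rw [sub_add_cancel] at hleft
  linarith [intervalIntegral_add_nat_nonneg hg h (a + 1) n]

lemma integral_eq_intervalIntegral_of_ae_eq_zero {g : ℝ → ℝ} {a b : ℝ} (hab : a ≤ b)
    (h : ∀ᵐ x, x ∉ Icc a b → g x = 0) : ∫ x, g x = ∫ x in a..b, g x := by
  rw [intervalIntegral.integral_of_le hab, ← integral_Icc_eq_integral_Ioc,
    setIntegral_eq_integral_of_ae_compl_eq_zero h]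

lemma ContDiff.w22loc {g : ℝ → ℝ} (hg : ContDiff ℝ 2 g) :
    W22loc g (deriv g) (deriv (deriv g)) := by
  obtain ⟨hg1, -, hg'⟩ := (contDiff_succ_iff_deriv (n := 1)).1 hg
  obtain ⟨hg'1, -, hg''⟩ := (contDiff_succ_iff_deriv (n := 0)).1 hg'
  have hc'' : Continuous (deriv (deriv g)) := hg''.continuous
  refine ⟨fun x => (hg1 x).hasDerivAt, hg'.continuous, fun a b => hc''.integrableOn_Icc,
    fun a b => (hc''.pow 2).integrableOn_Icc, fun x y => ?_⟩
  rw [intervalIntegral.integral_eq_sub_of_hasDerivAt (fun t _ => (hg'1 t).hasDerivAt)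
    (hc''.intervalIntegrable x y)]
  ring

lemma exists_w22loc_transition : ∃ f f' f'' : ℝ → ℝ, W22loc f f' f'' ∧
    ∃ T : ℝ, 0 < T ∧ (∀ x, T < x → f x = 1) ∧ (∀ x, x < -T → f x = -1) := by
  let g : ℝ → ℝ := fun x => 2 * Real.smoothTransition ((x + 1) / 2) - 1
  have hg : ContDiff ℝ 2 g := by fun_prop
  refine ⟨g, _, _, hg.w22loc, 1, one_pos, fun x hx => ?_, fun x hx => ?_⟩
  · norm_num [g, Real.smoothTransition.one_of_one_le (by linarith : 1 ≤ (x + 1) / 2)]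
  · simp [g, Real.smoothTransition.zero_of_nonpos (by linarith : (x + 1) / 2 ≤ 0)]

namespace W22loc

variable {f f' f'' : ℝ → ℝ}

lemma continuous (hf : W22loc f f' f'') : Continuous f :=
  continuous_iff_continuousAt.2 fun x => (hf.1 x).continuousAt

lemma w22On (hf : W22loc f f' f'') (a b : ℝ) : W22On f f' f'' a b :=
  ⟨fun x _ => (hf.1 x).hasDerivWithinAt, hf.2.1.continuousOn, hf.2.2.1 a b, hf.2.2.2.1 a b,
    fun x _ => hf.2.2.2.2 a x⟩

lemma intervalIntegrable_deriv2_sq (hf : W22loc f f' f'') (a b : ℝ) :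
    IntervalIntegrable (fun x => f'' x ^ 2) volume a b :=
  (hf.2.2.2.1 (min a b) (max a b)).intervalIntegrable

lemma locallyIntegrable_deriv2 (hf : W22loc f f' f'') : LocallyIntegrable f'' volume := fun x =>
  ⟨Icc (x - 1) (x + 1), Icc_mem_nhds (by linarith) (by linarith), hf.2.2.1 _ _⟩

lemma ae_hasDerivAt_deriv (hf : W22loc f f' f'') : ∀ᵐ x, HasDerivAt f' (f'' x) x := by
  filter_upwards [LocallyIntegrable.ae_hasDerivAt_integral hf.locallyIntegrable_deriv2] with x hx
  rw [show f' = fun y => f' 0 + ∫ t in (0 : ℝ)..y, f'' t from funext (hf.2.2.2.2 0)]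
  exact (hx 0).const_add _

lemma deriv_eq_zero_of_eventuallyEq_const (hf : W22loc f f' f'') {x C : ℝ}
    (h : f =ᶠ[𝓝 x] fun _ => C) : f' x = 0 :=
  (hf.1 x).unique ((hasDerivAt_const x C).congr_of_eventuallyEq h)

lemma ae_deriv2_eq_zero_of_eventuallyEq_const (hf : W22loc f f' f'') :
    ∀ᵐ x, ∀ C : ℝ, (f =ᶠ[𝓝 x] fun _ => C) → f'' x = 0 := by
  filter_upwards [hf.ae_hasDerivAt_deriv] with x hx C hC
  have hf'0 : f' =ᶠ[𝓝 x] fun _ => 0 :=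
    hC.eventually_nhds.mono fun y hy => hf.deriv_eq_zero_of_eventuallyEq_const hy
  exact hx.unique ((hasDerivAt_const x 0).congr_of_eventuallyEq hf'0)

end W22loc

def energyDensity (W : ℝ → ℝ) (k : ℝ) (f f' f'' : ℝ → ℝ) (x : ℝ) : ℝ :=
  W (f x) - k * f' x ^ 2 + f'' x ^ 2

section Energy

variable {W : ℝ → ℝ} {k k₀ c T : ℝ} {f f' f'' : ℝ → ℝ}

lemma W22loc.intervalIntegral_energyDensity (hf : W22loc f f' f'') (hW : Continuous W) (a b : ℝ) :
    ∫ x in a..b, energyDensity W k f f' f'' x =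
      (∫ x in a..b, W (f x)) - k * (∫ x in a..b, f' x ^ 2) + ∫ x in a..b, f'' x ^ 2 := by
  have hWf : IntervalIntegrable (fun x => W (f x)) volume a b :=
    (hW.comp hf.continuous).intervalIntegrable a b
  have hf'2 : IntervalIntegrable (fun x => f' x ^ 2) volume a b :=
    (hf.2.1.pow 2).intervalIntegrable a b
  rw [← intervalIntegral.integral_const_mul,
    ← intervalIntegral.integral_sub hWf (hf'2.const_mul k),
    ← intervalIntegral.integral_add (hWf.sub (hf'2.const_mul k))
      (hf.intervalIntegrable_deriv2_sq a b)]
  rfl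

lemma W22loc.intervalIntegrable_energyDensity (hf : W22loc f f' f'') (hW : Continuous W)
    (a b : ℝ) : IntervalIntegrable (energyDensity W k f f' f'') volume a b :=
  (((hW.comp hf.continuous).sub (continuous_const.mul (hf.2.1.pow 2))).intervalIntegrable
    a b).add (hf.intervalIntegrable_deriv2_sq a b)

lemma W22loc.ae_energyDensity_eq_zero (hf : W22loc f f' f'') (hW1 : W 1 = 0) (hWm1 : W (-1) = 0)
    (hfp : ∀ x, T < x → f x = 1) (hfm : ∀ x, x < -T → f x = -1) :
    ∀ᵐ x, x ∉ Icc (-T) T → energyDensity W k f f' f'' x = 0 := by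
  filter_upwards [hf.ae_deriv2_eq_zero_of_eventuallyEq_const] with x hx hxT
  obtain ⟨C, hC, hWC⟩ : ∃ C, (f =ᶠ[𝓝 x] fun _ => C) ∧ W C = 0 := by
    rcases not_and_or.1 hxT with h | h
    · exact ⟨-1, eventually_of_mem (Iio_mem_nhds (not_le.1 h)) hfm, hWm1⟩
    · exact ⟨1, eventually_of_mem (Ioi_mem_nhds (not_le.1 h)) hfp, hW1⟩
  simp [energyDensity, hC.eq_of_nhds, hWC, hf.deriv_eq_zero_of_eventuallyEq_const hC, hx C hC]

lemma W22loc.mul_le_intervalIntegral_energyDensity (hf : W22loc f f' f'') (hW : Continuous W)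
    (hk : 0 ≤ k) (hk₀ : 0 < k₀) {a b : ℝ}
    (hinterp : k₀ * ∫ x in a..b, f' x ^ 2 ≤ (∫ x in a..b, W (f x)) + ∫ x in a..b, f'' x ^ 2) :
    (1 - k / k₀) * ((∫ x in a..b, W (f x)) + ∫ x in a..b, f'' x ^ 2) ≤
      ∫ x in a..b, energyDensity W k f f' f'' x := by
  rw [hf.intervalIntegral_energyDensity hW]
  have := mul_le_mul_of_nonneg_left hinterp (div_nonneg hk hk₀.le)
  rw [← mul_assoc, div_mul_cancel₀ k hk₀.ne'] at this
  linarith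

lemma div_four_le_of_abs_le_half (hc : 0 ≤ c) (hWgp : ∀ s, 0 ≤ s → c * (s - 1) ^ 2 ≤ W s)
    (hWgn : ∀ s, s ≤ 0 → c * (s + 1) ^ 2 ≤ W s) {s : ℝ} (hs : |s| ≤ 1 / 2) : c / 4 ≤ W s := by
  obtain ⟨hs₁, hs₂⟩ := abs_le.1 hs
  rcases le_total 0 s with h | h
  · nlinarith [hWgp s h, mul_le_mul_of_nonneg_left (by nlinarith : 1 / 4 ≤ (s - 1) ^ 2) hc]
  · nlinarith [hWgn s h, mul_le_mul_of_nonneg_left (by nlinarith : 1 / 4 ≤ (s + 1) ^ 2) hc]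

lemma W22loc.min_le_of_eq_zero (hf : W22loc f f' f'') (hW : Continuous W) (hc : 0 ≤ c)
    (hWgp : ∀ s, 0 ≤ s → c * (s - 1) ^ 2 ≤ W s) (hWgn : ∀ s, s ≤ 0 → c * (s + 1) ^ 2 ≤ W s)
    (hk₀ : 0 ≤ k₀) {a : ℝ} (ha : f a = 0)
    (hinterp : k₀ * ∫ x in a..a + 1, f' x ^ 2 ≤
      (∫ x in a..a + 1, W (f x)) + ∫ x in a..a + 1, f'' x ^ 2) :
    min (c / 4) (k₀ / 4) ≤ (∫ x in a..a + 1, W (f x)) + ∫ x in a..a + 1, f'' x ^ 2 := by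
  have hf''2 : 0 ≤ ∫ x in a..a + 1, f'' x ^ 2 :=
    intervalIntegral.integral_nonneg (by linarith) fun x _ => sq_nonneg _
  by_cases hsmall : ∀ x ∈ Icc a (a + 1), |f x| ≤ 1 / 2
  · have hWf : c / 4 ≤ ∫ x in a..a + 1, W (f x) := by
      simpa using intervalIntegral.integral_mono_on (by linarith)
        (intervalIntegrable_const (μ := volume)) ((hW.comp hf.continuous).intervalIntegrable _ _)
        fun x hx => div_four_le_of_abs_le_half hc hWgp hWgn (hsmall x hx)
    linarith [min_le_left (c / 4) (k₀ / 4)]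
  · push Not at hsmall
    obtain ⟨b, ⟨hab, hba⟩, hb⟩ := hsmall
    have hf'2 : Continuous fun x => f' x ^ 2 := hf.2.1.pow 2
    have hcs := sq_sub_le_mul_integral_sq_deriv hab (fun x _ => hf.1 x)
      (hf.2.1.intervalIntegrable _ _) (hf'2.intervalIntegrable _ _)
    rw [ha, sub_zero] at hcs
    have hsq : 1 / 4 < f b ^ 2 := by nlinarith [sq_abs (f b), abs_nonneg (f b)]
    have hab2 : 0 ≤ ∫ x in a..b, f' x ^ 2 :=
      intervalIntegral.integral_nonneg hab fun x _ => sq_nonneg _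
    have hmono : ∫ x in a..b, f' x ^ 2 ≤ ∫ x in a..a + 1, f' x ^ 2 :=
      intervalIntegral.integral_mono_interval le_rfl hab hba
        (Eventually.of_forall fun x => sq_nonneg _) (hf'2.intervalIntegrable _ _)
    have hquarter : 1 / 4 ≤ ∫ x in a..a + 1, f' x ^ 2 := by nlinarith
    nlinarith [min_le_right (c / 4) (k₀ / 4)]

end Energy

/-- For `0 < k < k₀`, the optimal-profile constant `m_k` is strictly positive. -/
theorem mConst_pos
    (W : ℝ → ℝ) (hWcont : Continuous W) (hWnonneg : ∀ s, 0 ≤ W s)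
    (hWzero : ∀ s, W s = 0 ↔ s = 1 ∨ s = -1)
    (c : ℝ) (hc : 0 < c)
    (hWgp : ∀ s, 0 ≤ s → c * (s - 1) ^ 2 ≤ W s)
    (hWgn : ∀ s, s ≤ 0 → c * (s + 1) ^ 2 ≤ W s)
    (k₀ : ℝ) (hk₀pos : 0 < k₀)
    (hk₀ : ∀ a b : ℝ, a < b → ∀ u u' u'' : ℝ → ℝ, W22On u u' u'' a b →
      k₀ * ∫ x in a..b, (u' x) ^ 2 ≤
        ((b - a) ^ 2)⁻¹ * (∫ x in a..b, W (u x)) +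
          (b - a) ^ 2 * ∫ x in a..b, (u'' x) ^ 2)
    (k : ℝ) (hkpos : 0 < k) (hk : k < k₀) :
    0 < mConst W k := by
  have hgap : 0 < 1 - k / k₀ := sub_pos.2 ((div_lt_one hk₀pos).2 hk)
  obtain ⟨f, f', f'', hf, hT⟩ := exists_w22loc_transition
  have hm : 0 < (1 - k / k₀) * min (c / 4) (k₀ / 4) :=
    mul_pos hgap (lt_min (by positivity) (by positivity))
  refine hm.trans_le (le_csInf ⟨_, f, f', f'', hf, hT, rfl⟩ ?_)
  rintro _ ⟨f, f', f'', hf, ⟨T, -, hfp, hfm⟩, rfl⟩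
  have hinterp (a : ℝ) : k₀ * ∫ x in a..a + 1, f' x ^ 2 ≤
      (∫ x in a..a + 1, W (f x)) + ∫ x in a..a + 1, f'' x ^ 2 := by
    simpa using hk₀ a (a + 1) (by linarith) f f' f'' (hf.w22On a (a + 1))
  have hlower (a : ℝ) :=
    hf.mul_le_intervalIntegral_energyDensity hWcont hkpos.le hk₀pos (hinterp a)
  have hunit (a : ℝ) : 0 ≤ ∫ x in a..a + 1, energyDensity W k f f' f'' x :=
    (mul_nonneg hgap.le (add_nonneg
      (intervalIntegral.integral_nonneg (by linarith) fun x _ => hWnonneg _)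
      (intervalIntegral.integral_nonneg (by linarith) fun x _ => sq_nonneg _))).trans (hlower a)
  obtain ⟨x₀, hx₀⟩ : ∃ x₀, f x₀ = 0 :=
    intermediate_value_univ (-T - 1) (T + 1) hf.continuous
      (by simp [hfm (-T - 1) (by linarith), hfp (T + 1) (by linarith)])
  obtain ⟨n, hn⟩ := exists_nat_ge (|x₀| + T)
  have hsupp : Icc (-T) T ⊆ Icc (x₀ - n) (x₀ + 1 + n) := by
    apply Icc_subset_Icc <;> linarith [le_abs_self x₀, neg_abs_le x₀]
  have hzero := hf.ae_energyDensity_eq_zero (k := k) ((hWzero 1).2 (Or.inl rfl))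
    ((hWzero (-1)).2 (Or.inr rfl)) hfp hfm
  calc (1 - k / k₀) * min (c / 4) (k₀ / 4)
      ≤ (1 - k / k₀) * ((∫ x in x₀..x₀ + 1, W (f x)) + ∫ x in x₀..x₀ + 1, f'' x ^ 2) :=
        mul_le_mul_of_nonneg_left
          (hf.min_le_of_eq_zero hWcont hc.le hWgp hWgn hk₀pos.le hx₀ (hinterp x₀)) hgap.le
    _ ≤ ∫ x in x₀..x₀ + 1, energyDensity W k f f' f'' x := hlower x₀
    _ ≤ ∫ x in x₀ - n..x₀ + 1 + n, energyDensity W k f f' f'' x :=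
        intervalIntegral_le_intervalIntegral_sub_nat_add_nat
          (hf.intervalIntegrable_energyDensity hWcont) hunit x₀ n
    _ = ∫ x, energyDensity W k f f' f'' x :=
        (integral_eq_intervalIntegral_of_ae_eq_zero (by linarith)
          (hzero.mono fun x hx hxn => hx fun hxT => hxn (hsupp hxT))).symm
end

section
/- Let k₀ > 0 be the constant from the nonlinear interpolation inequality for W and let 0 < k < k₀. Define G^k(w,z) := inf { ∫_0^1 (W(g) − k(g')² + (g'')²) dx : g ∈ C²([0,1]), g(0) = w, g(1) = 1, g'(0) = z, g'(1) = 0 }. Then lim_{(w,z)→(1,0)} G^k(w,z) = 0. -/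
open MeasureTheory intervalIntegral

/-- `G^k(w,z) := inf { ∫_0^1 (W(g) − k(g')² + (g'')²) : g ∈ C²([0,1]),
g(0) = w, g(1) = 1, g'(0) = z, g'(1) = 0 }`. -/
noncomputable def Gk (W : ℝ → ℝ) (k : ℝ) (w z : ℝ) : ℝ :=
  sInf {r : ℝ | ∃ g g' g'' : ℝ → ℝ,
    (∀ x ∈ Set.Icc (0 : ℝ) 1, HasDerivWithinAt g (g' x) (Set.Icc (0 : ℝ) 1) x) ∧
    (∀ x ∈ Set.Icc (0 : ℝ) 1, HasDerivWithinAt g' (g'' x) (Set.Icc (0 : ℝ) 1) x) ∧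
    ContinuousOn g'' (Set.Icc (0 : ℝ) 1) ∧
    g 0 = w ∧ g 1 = 1 ∧ g' 0 = z ∧ g' 1 = 0 ∧
    r = ∫ x in (0 : ℝ)..1, (W (g x) - k * (g' x) ^ 2 + (g'' x) ^ 2)}

lemma W22On.of_hasDerivWithinAt {a b : ℝ} {u u' u'' : ℝ → ℝ}
    (hu : ∀ x ∈ Set.Icc a b, HasDerivWithinAt u (u' x) (Set.Icc a b) x)
    (hu' : ∀ x ∈ Set.Icc a b, HasDerivWithinAt u' (u'' x) (Set.Icc a b) x)
    (hu'' : ContinuousOn u'' (Set.Icc a b)) :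
    W22On u u' u'' a b := by
  have hu'_cont : ContinuousOn u' (Set.Icc a b) := fun x hx => (hu' x hx).continuousWithinAt
  refine ⟨hu, hu'_cont, hu''.integrableOn_Icc, (hu''.pow 2).integrableOn_Icc, fun x hx => ?_⟩
  have hsub : Set.Icc a x ⊆ Set.Icc a b := Set.Icc_subset_Icc le_rfl hx.2
  have hftc : ∫ t in a..x, u'' t = u' x - u' a := by
    refine integral_eq_sub_of_hasDerivAt_of_le hx.1 (hu'_cont.mono hsub) (fun t ht => ?_) ?_
    · have ht' : t ∈ Set.Ioo a b := ⟨ht.1, ht.2.trans_le hx.2⟩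
      exact (hu' t (Set.Ioo_subset_Icc_self ht')).hasDerivAt (Icc_mem_nhds ht'.1 ht'.2)
    · exact (hu''.mono (Set.uIcc_of_le hx.1 ▸ hsub)).intervalIntegrable
  rw [hftc]
  ring

/-- The cubic Hermite interpolant with `g(0) = w`, `g'(0) = z`, `g(1) = 1`, `g'(1) = 0`. -/
def hermiteCubic (w z x : ℝ) : ℝ :=
  1 + (w - 1) * (2 * x ^ 3 - 3 * x ^ 2 + 1) + z * (x ^ 3 - 2 * x ^ 2 + x)

def hermiteCubic' (w z x : ℝ) : ℝ :=
  (w - 1) * (6 * x ^ 2 - 6 * x) + z * (3 * x ^ 2 - 4 * x + 1)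

def hermiteCubic'' (w z x : ℝ) : ℝ :=
  (w - 1) * (12 * x - 6) + z * (6 * x - 4)

lemma hasDerivAt_hermiteCubic (w z x : ℝ) :
    HasDerivAt (hermiteCubic w z) (hermiteCubic' w z x) x := by
  have h3 : HasDerivAt (fun x : ℝ => x ^ 3) (3 * x ^ 2) x := by simpa using hasDerivAt_pow 3 x
  have h2 : HasDerivAt (fun x : ℝ => x ^ 2) (2 * x) x := by simpa using hasDerivAt_pow 2 x
  exact ((((h3.const_mul 2).sub (h2.const_mul 3)).add_const 1 |>.const_mul (w - 1)
    |>.const_add 1).add (((h3.sub (h2.const_mul 2)).add (hasDerivAt_id' x)).const_mul z))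
    |>.congr_deriv (by unfold hermiteCubic'; ring)

lemma hasDerivAt_hermiteCubic' (w z x : ℝ) :
    HasDerivAt (hermiteCubic' w z) (hermiteCubic'' w z x) x := by
  have h2 : HasDerivAt (fun x : ℝ => x ^ 2) (2 * x) x := by simpa using hasDerivAt_pow 2 x
  have h1 := hasDerivAt_id' x
  exact ((((h2.const_mul 6).sub (h1.const_mul 6)).const_mul (w - 1)).add
    ((((h2.const_mul 3).sub (h1.const_mul 4)).add_const 1).const_mul z))
    |>.congr_deriv (by unfold hermiteCubic''; ring)

noncomputable def hermiteEnergy (W : ℝ → ℝ) (k : ℝ) (p : ℝ × ℝ) : ℝ :=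
  ∫ x in (0 : ℝ)..1, (W (hermiteCubic p.1 p.2 x) - k * (hermiteCubic' p.1 p.2 x) ^ 2
    + (hermiteCubic'' p.1 p.2 x) ^ 2)

lemma continuous_hermiteEnergy {W : ℝ → ℝ} (hW : Continuous W) (k : ℝ) :
    Continuous (hermiteEnergy W k) := by
  apply continuous_parametric_intervalIntegral_of_continuous'
  unfold hermiteCubic hermiteCubic' hermiteCubic''
  fun_prop

lemma hermiteEnergy_one_zero {W : ℝ → ℝ} (hW1 : W 1 = 0) (k : ℝ) :
    hermiteEnergy W k (1, 0) = 0 := by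
  simp [hermiteEnergy, hermiteCubic, hermiteCubic', hermiteCubic'', hW1]

def admissibleEnergies (W : ℝ → ℝ) (k : ℝ) (w z : ℝ) : Set ℝ :=
  {r : ℝ | ∃ g g' g'' : ℝ → ℝ,
    (∀ x ∈ Set.Icc (0 : ℝ) 1, HasDerivWithinAt g (g' x) (Set.Icc (0 : ℝ) 1) x) ∧
    (∀ x ∈ Set.Icc (0 : ℝ) 1, HasDerivWithinAt g' (g'' x) (Set.Icc (0 : ℝ) 1) x) ∧
    ContinuousOn g'' (Set.Icc (0 : ℝ) 1) ∧
    g 0 = w ∧ g 1 = 1 ∧ g' 0 = z ∧ g' 1 = 0 ∧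
    r = ∫ x in (0 : ℝ)..1, (W (g x) - k * (g' x) ^ 2 + (g'' x) ^ 2)}

lemma hermiteEnergy_mem_admissibleEnergies (W : ℝ → ℝ) (k w z : ℝ) :
    hermiteEnergy W k (w, z) ∈ admissibleEnergies W k w z :=
  ⟨hermiteCubic w z, hermiteCubic' w z, hermiteCubic'' w z,
    fun x _ => (hasDerivAt_hermiteCubic w z x).hasDerivWithinAt,
    fun x _ => (hasDerivAt_hermiteCubic' w z x).hasDerivWithinAt,
    by unfold hermiteCubic''; fun_prop,
    by norm_num [hermiteCubic], by norm_num [hermiteCubic], by norm_num [hermiteCubic'],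
    by norm_num [hermiteCubic'], rfl⟩

section GkBounds

variable {W : ℝ → ℝ} (hW : Continuous W) {k k₀ : ℝ} (hk : k ≤ k₀)
  (hk₀ : ∀ u u' u'' : ℝ → ℝ, W22On u u' u'' 0 1 →
    k₀ * ∫ x in (0 : ℝ)..1, (u' x) ^ 2 ≤
      (∫ x in (0 : ℝ)..1, W (u x)) + ∫ x in (0 : ℝ)..1, (u'' x) ^ 2)
include hW hk hk₀

lemma energy_nonneg {g g' g'' : ℝ → ℝ}
    (hg : ∀ x ∈ Set.Icc (0 : ℝ) 1, HasDerivWithinAt g (g' x) (Set.Icc (0 : ℝ) 1) x)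
    (hg' : ∀ x ∈ Set.Icc (0 : ℝ) 1, HasDerivWithinAt g' (g'' x) (Set.Icc (0 : ℝ) 1) x)
    (hg'' : ContinuousOn g'' (Set.Icc (0 : ℝ) 1)) :
    0 ≤ ∫ x in (0 : ℝ)..1, (W (g x) - k * (g' x) ^ 2 + (g'' x) ^ 2) := by
  have hIcc : Set.uIcc (0 : ℝ) 1 = Set.Icc 0 1 := Set.uIcc_of_le zero_le_one
  have hg_cont : ContinuousOn g (Set.Icc (0 : ℝ) 1) := fun x hx => (hg x hx).continuousWithinAt
  have hg'_cont : ContinuousOn g' (Set.Icc (0 : ℝ) 1) := fun x hx => (hg' x hx).continuousWithinAt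
  have hWg : IntervalIntegrable (fun x => W (g x)) volume 0 1 :=
    (hW.comp_continuousOn (hIcc ▸ hg_cont)).intervalIntegrable
  have hg'sq : IntervalIntegrable (fun x => (g' x) ^ 2) volume 0 1 :=
    ((hIcc ▸ hg'_cont).pow 2).intervalIntegrable
  have hg''sq : IntervalIntegrable (fun x => (g'' x) ^ 2) volume 0 1 :=
    ((hIcc ▸ hg'').pow 2).intervalIntegrable
  have hsplit : ∫ x in (0 : ℝ)..1, (W (g x) - k * (g' x) ^ 2 + (g'' x) ^ 2) =
      (∫ x in (0 : ℝ)..1, W (g x)) - k * (∫ x in (0 : ℝ)..1, (g' x) ^ 2)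
        + ∫ x in (0 : ℝ)..1, (g'' x) ^ 2 := by
    rw [integral_add (hWg.sub (hg'sq.const_mul k)) hg''sq, integral_sub hWg (hg'sq.const_mul k),
      intervalIntegral.integral_const_mul]
  have hinterp := hk₀ g g' g'' (W22On.of_hasDerivWithinAt hg hg' hg'')
  have hg'sq_nonneg : 0 ≤ ∫ x in (0 : ℝ)..1, (g' x) ^ 2 :=
    integral_nonneg zero_le_one fun x _ => sq_nonneg _
  linarith [mul_le_mul_of_nonneg_right hk hg'sq_nonneg]

lemma nonneg_of_mem_admissibleEnergies {w z r : ℝ} (hr : r ∈ admissibleEnergies W k w z) :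
    0 ≤ r := by
  obtain ⟨g, g', g'', hg, hg', hg'', -, -, -, -, rfl⟩ := hr
  exact energy_nonneg hW hk hk₀ hg hg' hg''

lemma Gk_nonneg (w z : ℝ) : 0 ≤ Gk W k w z :=
  le_csInf ⟨_, hermiteEnergy_mem_admissibleEnergies W k w z⟩
    fun _ => nonneg_of_mem_admissibleEnergies hW hk hk₀

lemma Gk_le_hermiteEnergy (w z : ℝ) : Gk W k w z ≤ hermiteEnergy W k (w, z) :=
  csInf_le ⟨0, fun _ => nonneg_of_mem_admissibleEnergies hW hk hk₀⟩
    (hermiteEnergy_mem_admissibleEnergies W k w z)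

end GkBounds

theorem Gk_tendsto_zero_general
    (W : ℝ → ℝ) (hWcont : Continuous W)
    (hWzero : ∀ s, W s = 0 ↔ s = 1 ∨ s = -1)
    (k₀ : ℝ)
    (hk₀ : ∀ a b : ℝ, a < b → ∀ u u' u'' : ℝ → ℝ, W22On u u' u'' a b →
      k₀ * ∫ x in a..b, (u' x) ^ 2 ≤
        ((b - a) ^ 2)⁻¹ * (∫ x in a..b, W (u x)) +
          (b - a) ^ 2 * ∫ x in a..b, (u'' x) ^ 2)
    (k : ℝ) (hk : k < k₀) :
    Filter.Tendsto (fun p : ℝ × ℝ => Gk W k p.1 p.2)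
      (nhds ((1 : ℝ), (0 : ℝ))) (nhds 0) := by
  have hk₀01 : ∀ u u' u'' : ℝ → ℝ, W22On u u' u'' 0 1 →
      k₀ * ∫ x in (0 : ℝ)..1, (u' x) ^ 2 ≤
        (∫ x in (0 : ℝ)..1, W (u x)) + ∫ x in (0 : ℝ)..1, (u'' x) ^ 2 := fun u u' u'' hu => by
    simpa using hk₀ 0 1 zero_lt_one u u' u'' hu
  have hE : Filter.Tendsto (hermiteEnergy W k) (nhds (1, 0)) (nhds 0) := by
    simpa only [hermiteEnergy_one_zero ((hWzero 1).2 (Or.inl rfl)) k]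
      using (continuous_hermiteEnergy hWcont k).tendsto (1, 0)
  exact squeeze_zero (fun p => Gk_nonneg hWcont hk.le hk₀01 p.1 p.2)
    (fun p => Gk_le_hermiteEnergy hWcont hk.le hk₀01 p.1 p.2) hE

/-- For `0 < k < k₀`, `G^k(w,z) → 0` as `(w,z) → (1,0)`. -/
theorem Gk_tendsto_zero
    (W : ℝ → ℝ) (hWcont : Continuous W) (hWnonneg : ∀ s, 0 ≤ W s)
    (hWzero : ∀ s, W s = 0 ↔ s = 1 ∨ s = -1)
    (c : ℝ) (hc : 0 < c)
    (hWgp : ∀ s, 0 ≤ s → c * (s - 1) ^ 2 ≤ W s)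
    (hWgn : ∀ s, s ≤ 0 → c * (s + 1) ^ 2 ≤ W s)
    (k₀ : ℝ) (hk₀pos : 0 < k₀)
    (hk₀ : ∀ a b : ℝ, a < b → ∀ u u' u'' : ℝ → ℝ, W22On u u' u'' a b →
      k₀ * ∫ x in a..b, (u' x) ^ 2 ≤
        ((b - a) ^ 2)⁻¹ * (∫ x in a..b, W (u x)) +
          (b - a) ^ 2 * ∫ x in a..b, (u'' x) ^ 2)
    (k : ℝ) (hkpos : 0 < k) (hk : k < k₀) :
    Filter.Tendsto (fun p : ℝ × ℝ => Gk W k p.1 p.2)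
      (nhds ((1 : ℝ), (0 : ℝ))) (nhds 0) :=
  Gk_tendsto_zero_general W hWcont hWzero k₀ hk₀ k hk
end
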